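/- (Type A_n, self-dual dominant elements.) Let n ≥ 1 and let h ∈ ℝ^{n+1} be nonzero with weakly decreasing coordinates h₁ ≥ h₂ ≥ ⋯ ≥ h_{n+1} satisfying h_i = −h_{n+2−i} for all i = 1, …, n+1. Let j_h denote the number of indices i with h_i > 0. Then the minimum of ℓ_h⁻(λ) over all λ ∈ ℝ^{n+1} with weakly decreasing coordinates λ₁ ≥ ⋯ ≥ λ_{n+1} and λ₁ > λ_{n+1} equals n + 1 − j_h; it is attained at λ = ϖ₁ by the composition w = s_{n+1−j_h} ∘ ⋯ ∘ s₂ ∘ s₁ (with s₁ applied first). -/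

import Mathlib

open scoped RealInnerProductSpace

/-- The `j`-th simple reflection of type `Aₙ` (`1 ≤ j ≤ n`), acting on `ℝ^{n+1}`:
it transposes the coordinates numbered `j` and `j+1` (in `1`-based numbering). -/
noncomputable def sA (n j : ℕ) :
    EuclideanSpace ℝ (Fin (n + 1)) → EuclideanSpace ℝ (Fin (n + 1)) :=
  fun v => WithLp.toLp 2 (fun i =>
    v ⟨(if (i : ℕ) + 1 = j then j else if (i : ℕ) = j then j - 1 else (i : ℕ)) % (n + 1),
      Nat.mod_lt _ (Nat.succ_pos n)⟩)

/-- The composition of the simple reflections indexed by the entries of `l`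
(the last entry of the list is applied first). -/
noncomputable def compA (n : ℕ) (l : List ℕ) :
    EuclideanSpace ℝ (Fin (n + 1)) → EuclideanSpace ℝ (Fin (n + 1)) :=
  l.foldr (fun j g => sA n j ∘ g) id

/-- The fundamental weight `ϖⱼ = e₁ + ⋯ + eⱼ − (j/(n+1))·ε` of type `Aₙ` (`1 ≤ j ≤ n`). -/
noncomputable def wtA (n j : ℕ) : EuclideanSpace ℝ (Fin (n + 1)) :=
  WithLp.toLp 2 (fun i => (if (i : ℕ) < j then 1 else 0) - (j : ℝ) / ((n : ℝ) + 1))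

open scoped Classical in
/-- The number of (`1`-based) indices `i` with `hᵢ > 0`. -/
noncomputable def jPos (n : ℕ) (h : EuclideanSpace ℝ (Fin (n + 1))) : ℕ :=
  Finset.card (Finset.univ.filter fun i : Fin (n + 1) => 0 < h i)

/-
Indices are `0`-based, so `h` is negative exactly at the positions `≥ n + 1 - j_h`.

A word `w` of simple reflections permutes coordinates, each letter moving one coordinate by one
position, so the positions `S` taken by the first `t + 1` coordinates after applying `w` have index
sum at most `t (t + 1) / 2 + ℓ(w)`. Summation by parts against the dominant `λ` (using `∑ h = 0`)
shows that `⟪w λ, h⟫ < 0` forces `∑_{i ∈ S} h i < 0` for some `t`. Writing `h = h⁺ - h⁺ ∘ rev` and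
summing by parts against `h⁺` gives a `t' < j_h` such that `S` has fewer elements in `[0, t']` than
in `[n - t', n]`; a count then shows that the index sum of `S` exceeds `t (t + 1) / 2` by at least
`n - t' ≥ n + 1 - j_h`.
Conversely `s_k ⋯ s₁` with `k = n + 1 - j_h` moves the entry `1` of `ϖ₁` to position `k`,
where `h` is negative, and `⟪w ϖ₁, h⟫ = h_k`.
-/

open Finset

theorem Finset.mul_sum_le_sum_mul_of_sum_filter_le_nonneg {ι : Type*} [LinearOrder ι]
    {f g : ι → ℝ} (hf : Antitone f) (s : Finset ι) {c : ℝ} (hc : ∀ t ∈ s, c ≤ f t)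
    (hg : ∀ t ∈ s, c < f t → 0 ≤ ∑ i ∈ s with i ≤ t, g i) :
    c * ∑ i ∈ s, g i ≤ ∑ i ∈ s, f i * g i := by
  induction s using Finset.induction_on_max generalizing c with
  | empty => simp
  | insert x s hlt ih =>
    have hx : x ∉ s := fun hx => lt_irrefl x (hlt x hx)
    have hs : ∀ t ∈ s, ∑ i ∈ s with i ≤ t, g i = ∑ i ∈ insert x s with i ≤ t, g i := by
      intro t ht
      rw [filter_insert, if_neg (not_le.2 (hlt t ht))]
    rw [sum_insert hx, sum_insert hx]
    rcases (hc x (mem_insert_self x s)).lt_or_eq with hcx | hcx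
    · have htotal : 0 ≤ g x + ∑ i ∈ s, g i := by
        have := hg x (mem_insert_self x s) hcx
        rwa [filter_true_of_mem fun i hi => ?_, sum_insert hx] at this
        rcases mem_insert.1 hi with rfl | hi
        exacts [le_rfl, (hlt i hi).le]
      have hfx : f x * ∑ i ∈ s, g i ≤ ∑ i ∈ s, f i * g i :=
        ih (fun t ht => hf (hlt t ht).le) fun t ht hft => (hs t ht).symm ▸
          hg t (mem_insert_of_mem ht) (hcx.trans hft)
      nlinarith
    · subst hcx
      have := ih (fun t ht => hc t (mem_insert_of_mem ht)) fun t ht hct =>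
        (hs t ht).symm ▸ hg t (mem_insert_of_mem ht) hct
      linarith

theorem Finset.exists_sum_filter_le_neg {ι : Type*} [LinearOrder ι]
    {f g : ι → ℝ} (hf : Antitone f) {s : Finset ι} {c : ℝ} (hc : ∀ t ∈ s, c ≤ f t)
    (hfg : ∑ i ∈ s, f i * g i < c * ∑ i ∈ s, g i) :
    ∃ t ∈ s, c < f t ∧ ∑ i ∈ s with i ≤ t, g i < 0 := by
  by_contra! hcon
  exact hfg.not_ge (s.mul_sum_le_sum_mul_of_sum_filter_le_nonneg hf hc hcon)

theorem Finset.sum_range_add_le_sum (T : Finset ℕ) {b : ℕ} (hb : ∀ i ∈ T, b ≤ i) :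
    ∑ i ∈ range #T, (b + i) ≤ ∑ i ∈ T, i := by
  induction T using Finset.induction_on_max with
  | empty => simp
  | insert x s hlt ih =>
    have hx : x ∉ s := fun hx => lt_irrefl x (hlt x hx)
    have hcard : #s ≤ x - b := by
      simpa using card_le_card (s := s) (t := Ico b x) fun i hi =>
        mem_Ico.2 ⟨hb i (mem_insert_of_mem hi), hlt i hi⟩
    have := hb x (mem_insert_self x s)
    rw [card_insert_of_notMem hx, sum_range_succ, sum_insert hx]
    have := ih fun i hi => hb i (mem_insert_of_mem hi)
    omega

theorem Fin.sum_range_add_le_sum_val {N : ℕ} (T : Finset (Fin N)) {b : ℕ}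
    (hb : ∀ i ∈ T, b ≤ (i : ℕ)) : ∑ i ∈ range #T, (b + i) ≤ ∑ i ∈ T, (i : ℕ) := by
  simpa using (T.map Fin.valEmbedding).sum_range_add_le_sum (b := b) (by simpa using hb)

theorem Fin.sum_range_card_add_rev_le {n : ℕ} (S : Finset (Fin (n + 1))) {t : Fin (n + 1)}
    (ht : t < t.rev) (hcard : #{i ∈ S | i ≤ t} < #{i ∈ S | t.rev ≤ i}) :
    ∑ i ∈ range #S, i + t.rev ≤ ∑ i ∈ S, (i : ℕ) := by
  set low := {i ∈ S | i ≤ t}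
  set mid := {i ∈ S | t < i ∧ i < t.rev}
  set high := {i ∈ S | t.rev ≤ i}
  have hsplit : ∀ φ : Fin (n + 1) → ℕ,
      ∑ i ∈ S, φ i = ∑ i ∈ low, φ i + ∑ i ∈ mid, φ i + ∑ i ∈ high, φ i := by
    intro φ
    have hfilter_high : {i ∈ S | ¬i ≤ t ∧ t.rev ≤ i} = high :=
      filter_congr fun i _ => ⟨fun h => h.2, fun h => ⟨not_le.2 (ht.trans_le h), h⟩⟩
    have hfilter_mid : {i ∈ S | ¬i ≤ t ∧ ¬t.rev ≤ i} = mid :=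
      filter_congr fun i _ => by simp only [not_le]
    rw [← sum_filter_add_sum_filter_not S (· ≤ t),
      ← sum_filter_add_sum_filter_not {i ∈ S | ¬i ≤ t} (t.rev ≤ ·), filter_filter, filter_filter,
      hfilter_high, hfilter_mid]
    ring
  have hS : #S = #low + #mid + #high := by simpa using hsplit fun _ => 1
  have hmid : #mid ≤ t.rev - t - 1 := by
    rw [← Fin.card_Ioo]
    exact card_le_card fun i hi => mem_Ioo.2 (mem_filter.1 hi).2
  have hhigh : #high ≤ t + 1 := by
    have := card_le_card (s := high) (t := Ici t.rev) fun i hi => mem_Ici.2 (mem_filter.1 hi).2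
    rw [Fin.card_Ici, Fin.val_rev] at this
    omega
  have blow := Fin.sum_range_add_le_sum_val low (b := 0) fun _ _ => Nat.zero_le _
  have bmid := Fin.sum_range_add_le_sum_val mid (b := t + 1) fun i hi => (mem_filter.1 hi).2.1
  have bhigh := Fin.sum_range_add_le_sum_val high (b := t.rev) fun i hi => (mem_filter.1 hi).2
  have hshift : ∀ c r : ℕ, ∑ i ∈ range r, (c + i) = c * r + ∑ i ∈ range r, i := fun c r => by
    rw [sum_add_distrib, Finset.sum_const, card_range, smul_eq_mul, mul_comm]
  rw [hshift] at blow bmid bhigh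
  rw [hsplit, hS, sum_range_add, sum_range_add, hshift, hshift]
  have key : #low * #mid + (#low + #mid) * #high + t.rev ≤ (t + 1) * #mid + t.rev * #high := by
    have hmid' : #mid + t + 1 ≤ t.rev := by have : (t : ℕ) < t.rev := ht; omega
    -- naming the slacks of the constraints makes the goal a polynomial inequality in `ℕ`
    obtain ⟨b, hb⟩ : ∃ d, #high = #low + 1 + d := ⟨#high - #low - 1, by omega⟩
    obtain ⟨m, hm⟩ : ∃ d, (t.rev : ℕ) = #mid + t + 1 + d := ⟨t.rev - #mid - t - 1, by omega⟩
    obtain ⟨c, hc⟩ : ∃ d, (t : ℕ) = #low + b + d := ⟨t - #low - b, by omega⟩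
    rw [hb, hm, hc]
    ring_nf
    nlinarith
  omega

theorem Fin.sum_val_swap_le {N : ℕ} (V : Finset (Fin N)) {a b : Fin N} (hab : (b : ℕ) = a + 1) :
    ∑ j ∈ V, (Equiv.swap a b j : ℕ) ≤ ∑ j ∈ V, (j : ℕ) + 1 := by
  have hpt : ∀ j, (Equiv.swap a b j : ℕ) ≤ j + if j = a then 1 else 0 := by
    intro j
    rcases eq_or_ne j a with rfl | hja
    · simp [hab]
    rcases eq_or_ne j b with rfl | hjb
    · simp [hja]; omega
    · simp [Equiv.swap_apply_of_ne_of_ne hja hjb, hja]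
  calc ∑ j ∈ V, (Equiv.swap a b j : ℕ)
      ≤ ∑ j ∈ V, ((j : ℕ) + if j = a then 1 else 0) := sum_le_sum fun j _ => hpt j
    _ ≤ ∑ j ∈ V, (j : ℕ) + 1 := by
      rw [sum_add_distrib, sum_ite_eq']
      split_ifs <;> omega

theorem sA_apply {n t : ℕ} (ht₀ : 1 ≤ t) (ht : t ≤ n) (v : EuclideanSpace ℝ (Fin (n + 1)))
    (i : Fin (n + 1)) : sA n t v i = v (Equiv.swap ⟨t - 1, by omega⟩ ⟨t, by omega⟩ i) := by
  show v.ofLp _ = v.ofLp _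
  refine congrArg v.ofLp ?_
  rw [Equiv.swap_apply_def]
  rcases i with ⟨i, hi⟩
  simp only [Fin.ext_iff]
  split_ifs <;> (rw [Nat.mod_eq_of_lt (by omega)] <;> omega)

theorem exists_perm_compA {n : ℕ} {l : List ℕ} (hl : ∀ m ∈ l, 1 ≤ m ∧ m ≤ n) :
    ∃ e : Equiv.Perm (Fin (n + 1)), (∀ v i, compA n l v i = v (e i)) ∧
      ∀ U : Finset (Fin (n + 1)), ∑ i ∈ U, (e.symm i : ℕ) ≤ ∑ i ∈ U, (i : ℕ) + l.length := by
  induction l with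
  | nil => exact ⟨Equiv.refl _, fun _ _ => rfl, fun _ => by simp⟩
  | cons t l ih =>
    obtain ⟨ht₀, ht⟩ := hl t List.mem_cons_self
    obtain ⟨e, hcomp, hsum⟩ := ih fun m hm => hl m (List.mem_cons_of_mem t hm)
    let σ := Equiv.swap (⟨t - 1, by omega⟩ : Fin (n + 1)) ⟨t, by omega⟩
    refine ⟨σ.trans e, fun v i => ?_, fun U => ?_⟩
    · exact (sA_apply ht₀ ht _ i).trans (hcomp v _)
    · have := Fin.sum_val_swap_le (U.map e.symm.toEmbedding)
        (a := ⟨t - 1, by omega⟩) (b := ⟨t, by omega⟩) (by simp; omega)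
      simp only [sum_map, Equiv.coe_toEmbedding] at this
      have := hsum U
      simp only [σ, Equiv.symm_trans_apply, Equiv.symm_swap, List.length_cons]
      omega

theorem compA_wtA_one {n k : ℕ} (hk : k ≤ n) (i : Fin (n + 1)) :
    compA n ((List.range k).map (k - ·)) (wtA n 1) i =
      (if (i : ℕ) = k then 1 else 0) - 1 / (n + 1) := by
  induction k generalizing i with
  | zero => simp [compA, wtA]
  | succ k ih =>
    have hword : (List.range (k + 1)).map (k + 1 - ·) = (k + 1) :: (List.range k).map (k - ·) := by
      rw [List.range_succ_eq_map, List.map_cons, List.map_map]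
      congr 1
      exact List.map_congr_left fun x _ => by simp
    rw [hword]
    show sA n (k + 1) (compA n _ (wtA n 1)) i = _
    rw [sA_apply (by omega) hk, ih (by omega)]
    simp only [Nat.add_sub_cancel]
    congr 1
    rcases eq_or_ne i ⟨k, by omega⟩ with rfl | hia
    · rw [Equiv.swap_apply_left]
      simp
    rcases eq_or_ne i ⟨k + 1, by omega⟩ with rfl | hib
    · rw [Equiv.swap_apply_right]
      simp
    · rw [Equiv.swap_apply_of_ne_of_ne hia hib]
      have hia' : (i : ℕ) ≠ k := fun h => hia (Fin.ext h)
      have hib' : (i : ℕ) ≠ k + 1 := fun h => hib (Fin.ext h)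
      simp [hia', hib']

theorem antitone_wtA (n j : ℕ) : Antitone (wtA n j) := fun i i' hii' => by
  have : (i : ℕ) ≤ i' := hii'
  unfold wtA
  apply sub_le_sub_right
  split_ifs <;> first | omega | norm_num

theorem real_inner_eq_sum_mul {ι : Type*} [Fintype ι] (x y : EuclideanSpace ℝ ι) :
    ⟪x, y⟫ = ∑ i, x i * y i := by
  simp [PiLp.inner_apply, mul_comm]

theorem sum_filter_le_indicator_sub_rev {n : ℕ} (S : Finset (Fin (n + 1))) (t : Fin (n + 1)) :
    ∑ i with i ≤ t, (((if i ∈ S then 1 else 0) - if i.rev ∈ S then 1 else 0) : ℝ) =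
      #{i ∈ S | i ≤ t} - #{i ∈ S | t.rev ≤ i} := by
  have hreindex := Equiv.sum_comp Fin.revPerm fun i => if i.rev ∈ S ∧ i ≤ t then (1 : ℝ) else 0
  simp only [Fin.revPerm_apply, Fin.rev_rev, Fin.rev_le_iff] at hreindex
  rw [sum_sub_distrib, sum_filter, sum_filter]
  simp only [← ite_and, and_comm (a := _ ≤ t), ← hreindex]
  simp only [← sum_filter, sum_const, nsmul_eq_mul, mul_one]
  congr 3 <;> ext <;> simp

section SelfDual

variable {n : ℕ} {h : EuclideanSpace ℝ (Fin (n + 1))}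

theorem sum_eq_zero_of_rev (hrev : ∀ i, h i.rev = -h i) : ∑ i, h i = 0 := by
  have := Equiv.sum_comp Fin.revPerm (h ·)
  simp only [Fin.revPerm_apply, hrev, sum_neg_distrib] at this
  linarith

theorem jPos_eq_card : jPos n h = #{i | 0 < h i} := by
  unfold jPos
  congr 1

theorem two_mul_jPos_le (hrev : ∀ i, h i.rev = -h i) : 2 * jPos n h ≤ n + 1 := by
  rw [jPos_eq_card]
  set P : Finset (Fin (n + 1)) := {i | 0 < h i}
  have hdisj : Disjoint P (P.map Fin.revPerm.toEmbedding) := by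
    refine disjoint_left.2 fun i hi hi' => ?_
    obtain ⟨j, hj, rfl⟩ := mem_map.1 hi'
    simp only [P, mem_filter, mem_univ, true_and, Equiv.coe_toEmbedding, Fin.revPerm_apply,
      hrev] at hi hj
    linarith
  have := card_le_univ (P ∪ P.map Fin.revPerm.toEmbedding)
  rw [card_union_of_disjoint hdisj, card_map, Fintype.card_fin] at this
  omega

theorem val_lt_jPos_iff (hanti : Antitone h) (i : Fin (n + 1)) :
    (i : ℕ) < jPos n h ↔ 0 < h i := by
  rw [jPos_eq_card]
  constructor
  · intro hi
    by_contra! hneg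
    have hsub : ({j | 0 < h j} : Finset _) ⊆ Iio i := fun j hj => by
      simp only [mem_filter, mem_univ, true_and] at hj
      exact mem_Iio.2 (lt_of_not_ge fun hij => (hj.trans_le (hanti hij)).not_ge hneg)
    have := card_le_card hsub
    rw [Fin.card_Iio] at this
    omega
  · intro hi
    have hsub : Iic i ⊆ ({j | 0 < h j} : Finset _) := fun j hj => by
      simp only [mem_filter, mem_univ, true_and]
      exact hi.trans_le (hanti (mem_Iic.1 hj))
    have := card_le_card hsub
    rw [Fin.card_Iic] at this
    omega

theorem sum_posPart_mul_sub_rev (hrev : ∀ i, h i.rev = -h i) (S : Finset (Fin (n + 1))) :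
    ∑ i, (h i)⁺ * ((if i ∈ S then 1 else 0) - if i.rev ∈ S then 1 else 0) = ∑ i ∈ S, h i := by
  have hreindex := Equiv.sum_comp Fin.revPerm fun i => (h i)⁺ * if i.rev ∈ S then 1 else 0
  simp only [Fin.revPerm_apply, Fin.rev_rev, hrev, posPart_neg] at hreindex
  calc ∑ i, (h i)⁺ * ((if i ∈ S then 1 else 0) - if i.rev ∈ S then 1 else 0)
      = ∑ i, (h i)⁺ * (if i ∈ S then 1 else 0) - ∑ i, (h i)⁻ * (if i ∈ S then 1 else 0) := by
        rw [hreindex, ← sum_sub_distrib]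
        simp only [mul_sub]
    _ = ∑ i, h i * (if i ∈ S then 1 else 0) := by
        rw [← sum_sub_distrib]
        simp only [← sub_mul, posPart_sub_negPart]
    _ = ∑ i ∈ S, h i := by simp

theorem sum_range_card_add_le_sum_val_of_sum_neg (hanti : Antitone h)
    (hrev : ∀ i, h i.rev = -h i) {S : Finset (Fin (n + 1))} (hS : ∑ i ∈ S, h i < 0) :
    ∑ i ∈ range #S, i + (n + 1 - jPos n h) ≤ ∑ i ∈ S, (i : ℕ) := by
  obtain ⟨t, -, ht, hcard⟩ := exists_sum_filter_le_neg (s := univ) (c := 0)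
    (f := fun i => (h i)⁺) (g := fun i => (if i ∈ S then 1 else 0) - if i.rev ∈ S then 1 else 0)
    (fun i j hij => posPart_mono (hanti hij)) (fun t _ => posPart_nonneg _)
    (by rwa [zero_mul, sum_posPart_mul_sub_rev hrev])
  rw [sum_filter_le_indicator_sub_rev, sub_neg, Nat.cast_lt] at hcard
  have htj := (val_lt_jPos_iff hanti t).2 (posPart_pos_iff.1 ht)
  have hj := two_mul_jPos_le hrev
  have hrevt : (t.rev : ℕ) = n - t := by rw [Fin.val_rev]; omega
  have := Fin.sum_range_card_add_rev_le S (Fin.lt_def.2 (by omega)) hcard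
  omega

theorem le_length_of_inner_compA_neg (hanti : Antitone h) (hrev : ∀ i, h i.rev = -h i)
    {lam : EuclideanSpace ℝ (Fin (n + 1))} (hlam : Antitone lam) {l : List ℕ}
    (hl : ∀ m ∈ l, 1 ≤ m ∧ m ≤ n) (hneg : ⟪compA n l lam, h⟫ < 0) :
    n + 1 - jPos n h ≤ l.length := by
  obtain ⟨e, hcomp, hsum⟩ := exists_perm_compA hl
  have hinner : ⟪compA n l lam, h⟫ = ∑ y, lam y * h (e.symm y) := by
    rw [real_inner_eq_sum_mul, ← Equiv.sum_comp e fun y => lam y * h (e.symm y)]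
    simp only [hcomp, Equiv.symm_apply_apply]
  have hg : ∑ y, h (e.symm y) = 0 := by
    rw [Equiv.sum_comp e.symm (h ·), sum_eq_zero_of_rev hrev]
  obtain ⟨t, -, -, ht⟩ := exists_sum_filter_le_neg (s := univ) (c := lam (Fin.last n))
    (g := fun y => h (e.symm y)) hlam (fun t _ => hlam (Fin.le_last t))
    (by rwa [hg, mul_zero, ← hinner])
  rw [filter_ge_eq_Iic] at ht
  have hS : ∑ i ∈ (Iic t).map e.symm.toEmbedding, h i < 0 := by rwa [sum_map]
  have hcore := sum_range_card_add_le_sum_val_of_sum_neg hanti hrev hS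
  have hIic : ∑ i ∈ Iic t, (i : ℕ) = ∑ i ∈ range #(Iic t), i := by
    rw [Fin.card_Iic, Nat.range_succ_eq_Iic, ← Fin.map_valEmbedding_Iic, sum_map]
    rfl
  rw [card_map, sum_map] at hcore
  have := hsum (Iic t)
  simp only [Equiv.coe_toEmbedding] at hcore
  omega

theorem jPos_pos (hanti : Antitone h) (hrev : ∀ i, h i.rev = -h i) (hne : h ≠ 0) :
    0 < jPos n h := by
  by_contra! hj
  refine hne (WithLp.ofLp_injective 2 (funext fun i => le_antisymm ?_ ?_))
  · exact not_lt.1 fun hi => by have := (val_lt_jPos_iff hanti i).2 hi; omega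
  · have := (val_lt_jPos_iff hanti i.rev).not.1 (by omega)
    rw [hrev] at this
    simp only [WithLp.ofLp_zero, Pi.zero_apply]
    linarith

theorem inner_compA_wtA_one_neg (hanti : Antitone h) (hrev : ∀ i, h i.rev = -h i) (hne : h ≠ 0) :
    ⟪compA n ((List.range (n + 1 - jPos n h)).map (n + 1 - jPos n h - ·)) (wtA n 1), h⟫ < 0 := by
  have hj := jPos_pos hanti hrev hne
  set k := n + 1 - jPos n h
  have hk : k ≤ n := by omega
  rw [real_inner_eq_sum_mul]
  simp only [compA_wtA_one hk, sub_mul, sum_sub_distrib, ite_mul, one_mul, zero_mul,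
    ← mul_sum, sum_eq_zero_of_rev hrev, mul_zero, sub_zero]
  have hval : ∀ x : Fin (n + 1), (x : ℕ) = k ↔ x = ⟨k, by omega⟩ := fun x => by simp [Fin.ext_iff]
  simp only [hval, sum_ite_eq', mem_univ, if_true]
  have hpos := (val_lt_jPos_iff hanti (Fin.rev ⟨k, by omega⟩)).1
    (by rw [Fin.val_rev, Fin.val_mk]; omega)
  have := hrev (Fin.rev ⟨k, by omega⟩)
  rw [Fin.rev_rev] at this
  linarith

end SelfDual

theorem statement5 (n : ℕ) (h : EuclideanSpace ℝ (Fin (n + 1)))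
    (hne : h ≠ 0)
    (hdec : ∀ i j : Fin (n + 1), i ≤ j → h j ≤ h i)
    (hsd : ∀ i : Fin (n + 1), h i = - h ⟨n - (i : ℕ), by omega⟩) :
    (∀ lam : EuclideanSpace ℝ (Fin (n + 1)),
        (∀ i j : Fin (n + 1), i ≤ j → lam j ≤ lam i) →
        lam ⟨n, by omega⟩ < lam ⟨0, by omega⟩ →
        ∀ l : List ℕ, (∀ m ∈ l, 1 ≤ m ∧ m ≤ n) →
          ⟪compA n l lam, h⟫ < 0 → n + 1 - jPos n h ≤ l.length) ∧
    IsLeast {k : ℕ | ∃ l : List ℕ, (∀ m ∈ l, 1 ≤ m ∧ m ≤ n) ∧ l.length = k ∧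
        ⟪compA n l (wtA n 1), h⟫ < 0} (n + 1 - jPos n h) ∧
    ⟪compA n ((List.range (n + 1 - jPos n h)).map (fun i => n + 1 - jPos n h - i))
        (wtA n 1), h⟫ < 0 := by
  have hrev : ∀ i : Fin (n + 1), h i.rev = -h i := fun i => by
    rw [hsd i, neg_neg]
    exact congrArg h.ofLp (Fin.ext (by simp only [Fin.val_rev]; omega))
  have hwit := inner_compA_wtA_one_neg hdec hrev hne
  have hj := jPos_pos hdec hrev hne
  refine ⟨fun lam hlam _ l hl hneg => le_length_of_inner_compA_neg hdec hrev hlam hl hneg,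
    ⟨⟨_, fun m hm => ?_, by simp, hwit⟩, ?_⟩, hwit⟩
  · obtain ⟨i, hi, rfl⟩ := List.mem_map.1 hm
    have := List.mem_range.1 hi
    omega
  · rintro _ ⟨l, hl, rfl, hneg⟩
    exact le_length_of_inner_compA_neg hdec hrev (antitone_wtA n 1) hl hneg
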